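/- arXiv:1704.08554 — 2 statements merged into one kernel-verified Lean document; each statement's English description precedes it below -/
import Mathlib

section
/- Let G be a wide subgroup of ℚ^m, π₀ a finite set of primes, k ∈ ℕ⁺ and s ∈ ℤ \ {0}. Then there exist an increasing chain π₀ ⊆ π₁ ⊆ ⋯ ⊆ π_k of finite sets of primes and elements g₁,…,g_k ∈ G such that for every j = 1,…,k: g_j ∈ Q_{π_j}^m, ⟨g_j⟩ ∩ Q_{π_{j-1}}^m ⊆ (sℤ)^m, and n·g_j ∉ Q_{π_{j-1}}^m for every nonzero integer n with |n| ≤ k. -/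
/-!
Given `π`, wideness yields `x ∈ G` with a coordinate whose denominator has a prime factor `p`
outside `π ∪ {primes ≤ k} ∪ {primes dividing s}`. Let `N` be the prime-to-`p` part of the product
of the denominators of `x`, so that the denominators of `N • x` are powers of `p`, and take
`g = (s N) • x` and `π' = π ∪ {p}`. If `n • g = s • (n N • x)` lies in `Q_π^m`, then, as `p ∤ s`,
the denominators of `n N • x` are powers of `p` not divisible by `p`, hence `1`. For `0 < |n| ≤ k`
the integer `n s N` is prime to `p`, so `p` still divides a denominator of `n • g`.
Iterating this step from `π₀` gives the chain.
-/

open Pointwise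

/-- Rationals whose reduced denominator has all prime divisors in the finite set `π`. -/
def QpiSet (π : Finset ℕ) : Set ℚ := {q : ℚ | ∀ p : ℕ, p.Prime → p ∣ q.den → p ∈ π}

/-- The subset `Q_π^m` of `ℚ^m`. -/
def QpiVec (m : ℕ) (π : Finset ℕ) : Set (Fin m → ℚ) := {v | ∀ i, v i ∈ QpiSet π}

/-- The subset `(sℤ)^m` of `ℚ^m`. -/
def intVec (m : ℕ) (s : ℤ) : Set (Fin m → ℚ) := {v | ∀ i, ∃ z : ℤ, v i = (s : ℚ) * z}

lemma QpiSet_mono {π σ : Finset ℕ} (h : π ⊆ σ) : QpiSet π ⊆ QpiSet σ :=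
  fun _ hq p hp hpd => h (hq p hp hpd)

lemma Rat.den_intCast_mul_dvd (c : ℤ) (q : ℚ) : ((c : ℚ) * q).den ∣ q.den := by
  simpa using Rat.mul_den_dvd (c : ℚ) q

lemma Rat.den_dvd_natAbs_mul_den_intCast_mul {c : ℤ} (hc : c ≠ 0) (q : ℚ) :
    q.den ∣ c.natAbs * ((c : ℚ) * q).den := by
  have hq : q = (c : ℚ)⁻¹ * ((c : ℚ) * q) := by field_simp
  conv_lhs => rw [hq]
  simpa [Rat.inv_intCast_den, hc] using Rat.mul_den_dvd (c : ℚ)⁻¹ ((c : ℚ) * q)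

lemma Nat.Prime.dvd_den_intCast_mul_iff {p : ℕ} (hp : p.Prime) {c : ℤ} (hc : ¬ (p : ℤ) ∣ c)
    (q : ℚ) : p ∣ ((c : ℚ) * q).den ↔ p ∣ q.den := by
  refine ⟨fun h => h.trans (Rat.den_intCast_mul_dvd c q), fun h => ?_⟩
  have hc0 : c ≠ 0 := by rintro rfl; exact hc (dvd_zero _)
  have hpc : ¬ p ∣ c.natAbs := fun h' => hc (Int.natCast_dvd.mpr h')
  exact (hp.dvd_mul.mp (h.trans (Rat.den_dvd_natAbs_mul_den_intCast_mul hc0 q))).resolve_left hpc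

lemma intCast_mul_mem_QpiSet {π : Finset ℕ} (c : ℤ) {q : ℚ} (hq : q ∈ QpiSet π) :
    (c : ℚ) * q ∈ QpiSet π :=
  fun p hp hpd => hq p hp (hpd.trans (Rat.den_intCast_mul_dvd c q))

lemma mem_QpiSet_of_natCast_mul_eq_intCast {π : Finset ℕ} {M : ℕ} (hM0 : M ≠ 0)
    (hM : ∀ p : ℕ, p.Prime → p ∣ M → p ∈ π) {q : ℚ} {z : ℤ} (h : (M : ℚ) * q = z) :
    q ∈ QpiSet π := by
  have hq : q = Rat.divInt z M := by
    rw [Rat.divInt_eq_div, ← h]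
    push_cast
    field_simp
  have hden : q.den ∣ M := by
    rw [hq]
    exact_mod_cast Rat.den_dvd z M
  exact fun p hp hpd => hM p hp (hpd.trans hden)

lemma den_eq_one_of_mem_QpiSet_singleton {p : ℕ} {q : ℚ} (hq : q ∈ QpiSet {p})
    (hpq : ¬ p ∣ q.den) : q.den = 1 :=
  Nat.eq_one_iff_not_exists_prime_dvd.mpr fun r hr hrd =>
    hpq (Finset.mem_singleton.mp (hq r hr hrd) ▸ hrd)

lemma exists_not_dvd_natCast_mul_mem_QpiSet_singleton {ι : Type*} [Fintype ι] (x : ι → ℚ)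
    {p : ℕ} (hp : p.Prime) : ∃ N : ℕ, ¬ p ∣ N ∧ ∀ i, (N : ℚ) * x i ∈ QpiSet {p} := by
  set D := ∏ i, (x i).den
  have hD0 : D ≠ 0 := Finset.prod_ne_zero_iff.mpr fun i _ => (x i).den_nz
  refine ⟨ordCompl[p] D, Nat.not_dvd_ordCompl hp hD0, fun i => ?_⟩
  obtain ⟨e, he⟩ : (x i).den ∣ D := Finset.dvd_prod_of_mem _ (Finset.mem_univ i)
  refine mem_QpiSet_of_natCast_mul_eq_intCast (M := p ^ D.factorization p) (z := e * (x i).num)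
    (pow_ne_zero _ hp.ne_zero) ?_ ?_
  · intro r hr hrd
    exact Finset.mem_singleton.mpr ((Nat.prime_dvd_prime_iff_eq hr hp).mp (hr.dvd_of_dvd_pow hrd))
  · have hsplit : ((p ^ D.factorization p : ℕ) : ℚ) * (ordCompl[p] D : ℕ) = D := by
      exact_mod_cast Nat.ordProj_mul_ordCompl_eq_self D p
    calc ((p ^ D.factorization p : ℕ) : ℚ) * ((ordCompl[p] D : ℕ) * x i)
        = D * x i := by rw [← mul_assoc, hsplit]
      _ = e * (x i * (x i).den) := by rw [he]; push_cast; ring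
      _ = ((e * (x i).num : ℤ) : ℚ) := by rw [Rat.mul_den_eq_num]; push_cast; ring

section Step

variable {m : ℕ} {π : Finset ℕ} {p : ℕ} {s : ℤ} {N : ℕ} {x : Fin m → ℚ}

lemma zsmul_mul_mem_QpiVec_singleton (hN : ∀ i, (N : ℚ) * x i ∈ QpiSet {p}) :
    (s * N) • x ∈ QpiVec m {p} := fun i => by
  have hgi : ((s * N) • x) i = s * (N * x i) := by
    rw [Pi.smul_apply, zsmul_eq_mul]
    push_cast
    ring
  rw [hgi]
  exact intCast_mul_mem_QpiSet s (hN i)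

lemma zmultiples_zsmul_mul_inter_QpiVec_subset_intVec (hp : p.Prime) (hpπ : p ∉ π)
    (hps : ¬ (p : ℤ) ∣ s) (hN : ∀ i, (N : ℚ) * x i ∈ QpiSet {p}) :
    (AddSubgroup.zmultiples ((s * N) • x) : Set (Fin m → ℚ)) ∩ QpiVec m π ⊆ intVec m s := by
  rintro _ ⟨⟨n, rfl⟩, hv⟩ i
  dsimp only at hv ⊢
  set y := (n : ℚ) * (N * x i)
  have hvi : (n • (s * N) • x) i = s * y := by
    rw [smul_smul, Pi.smul_apply, zsmul_eq_mul]
    push_cast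
    ring
  have hpy : ¬ p ∣ y.den := by
    rw [← hp.dvd_den_intCast_mul_iff hps, ← hvi]
    exact fun h => hpπ (hv i p hp h)
  have hy : y.den = 1 := den_eq_one_of_mem_QpiSet_singleton (intCast_mul_mem_QpiSet n (hN i)) hpy
  exact ⟨y.num, by rw [hvi, Rat.coe_int_num_of_den_eq_one hy]⟩

lemma zsmul_zsmul_mul_notMem_QpiVec {k : ℕ} (hp : p.Prime) (hpπ : p ∉ π) (hpk : k < p)
    (hps : ¬ (p : ℤ) ∣ s) (hpN : ¬ p ∣ N) {i : Fin m} (hpx : p ∣ (x i).den)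
    {n : ℤ} (hn : n ≠ 0) (hnk : |n| ≤ k) : n • (s * N) • x ∉ QpiVec m π := by
  have hpZ : Prime (p : ℤ) := Nat.prime_iff_prime_int.mp hp
  have hpn : ¬ (p : ℤ) ∣ n := fun h => by
    have := Int.le_of_dvd (abs_pos.mpr hn) ((dvd_abs _ _).mpr h)
    omega
  have hpc : ¬ (p : ℤ) ∣ n * (s * N) := by
    simp only [hpZ.dvd_mul, not_or]
    exact ⟨hpn, hps, fun h => hpN (Int.natCast_dvd_natCast.mp h)⟩
  have hvi : (n • (s * N) • x) i = ((n * (s * N) : ℤ) : ℚ) * x i := by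
    rw [smul_smul, Pi.smul_apply, zsmul_eq_mul]
  intro hv
  exact hpπ (hv i p hp (by rw [hvi, hp.dvd_den_intCast_mul_iff hpc]; exact hpx))

end Step

lemma exists_mem_prime_dvd_den_notMem {m : ℕ} {G : AddSubgroup (Fin m → ℚ)}
    (hwide : ∀ π : Finset ℕ, (∀ p ∈ π, Nat.Prime p) → ∃ x ∈ G, x ∉ QpiVec m π)
    {π : Finset ℕ} (hπ : ∀ p ∈ π, p.Prime) (k : ℕ) {s : ℤ} (hs : s ≠ 0) :
    ∃ x ∈ G, ∃ i p, p.Prime ∧ p ∣ (x i).den ∧ p ∉ π ∧ k < p ∧ ¬ (p : ℤ) ∣ s := by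
  classical
  set τ := π ∪ {p ∈ Finset.range (k + 1) | p.Prime} ∪ s.natAbs.primeFactors
  have hτ : ∀ p ∈ τ, p.Prime := by
    simp only [τ, Finset.mem_union, Finset.mem_filter]
    rintro p ((hp | hp) | hp)
    exacts [hπ p hp, hp.2, Nat.prime_of_mem_primeFactors hp]
  obtain ⟨x, hxG, hx⟩ := hwide τ hτ
  simp only [QpiVec, QpiSet, Set.mem_ofPred_eq, not_forall] at hx
  obtain ⟨i, p, hp, hpx, hpτ⟩ := hx
  simp only [τ, Finset.mem_union, Finset.mem_filter, Finset.mem_range, Nat.mem_primeFactors,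
    not_or, not_and, ne_eq, Int.natAbs_eq_zero] at hpτ
  refine ⟨x, hxG, i, p, hp, hpx, hpτ.1.1, ?_, fun h => hpτ.2 hp (Int.natCast_dvd.mp h) hs⟩
  by_contra! hle
  exact hpτ.1.2 (by omega) hp

lemma exists_step {m : ℕ} (G : AddSubgroup (Fin m → ℚ))
    (hwide : ∀ π : Finset ℕ, (∀ p ∈ π, Nat.Prime p) → ∃ x ∈ G, x ∉ QpiVec m π)
    (k : ℕ) {s : ℤ} (hs : s ≠ 0) (π : Finset ℕ) (hπ : ∀ p ∈ π, p.Prime) :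
    ∃ (π' : Finset ℕ) (g : Fin m → ℚ),
      π ⊆ π' ∧ (∀ p ∈ π', p.Prime) ∧ g ∈ G ∧ g ∈ QpiVec m π' ∧
      ((AddSubgroup.zmultiples g : Set (Fin m → ℚ)) ∩ QpiVec m π ⊆ intVec m s) ∧
      ∀ n : ℤ, n ≠ 0 → |n| ≤ (k : ℤ) → n • g ∉ QpiVec m π := by
  obtain ⟨x, hxG, i, p, hp, hpx, hpπ, hpk, hps⟩ := exists_mem_prime_dvd_den_notMem hwide hπ k hs
  obtain ⟨N, hpN, hN⟩ := exists_not_dvd_natCast_mul_mem_QpiSet_singleton x hp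
  refine ⟨insert p π, (s * N) • x, Finset.subset_insert p π, ?_, G.zsmul_mem hxG _,
    fun j => QpiSet_mono (by simp) (zsmul_mul_mem_QpiVec_singleton hN j),
    zmultiples_zsmul_mul_inter_QpiVec_subset_intVec hp hpπ hps hN,
    fun n hn hnk => zsmul_zsmul_mul_notMem_QpiVec hp hpπ hpk hps hpN hpx hn hnk⟩
  simpa [Finset.forall_mem_insert] using ⟨hp, hπ⟩

theorem stmt_9_general (m : ℕ) (G : AddSubgroup (Fin m → ℚ))
    (hwide : ∀ π : Finset ℕ, (∀ p ∈ π, Nat.Prime p) → ∃ x ∈ G, x ∉ QpiVec m π)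
    (π₀ : Finset ℕ) (hπ₀ : ∀ p ∈ π₀, Nat.Prime p)
    (k : ℕ) (s : ℤ) (hs : s ≠ 0) :
    ∃ (π : ℕ → Finset ℕ) (g : ℕ → Fin m → ℚ),
      π 0 = π₀ ∧
      (∀ j < k, π j ⊆ π (j + 1)) ∧
      (∀ j ≤ k, ∀ p ∈ π j, Nat.Prime p) ∧
      ∀ j, 1 ≤ j → j ≤ k →
        g j ∈ G ∧
        g j ∈ QpiVec m (π j) ∧
        ((AddSubgroup.zmultiples (g j) : Set (Fin m → ℚ)) ∩ QpiVec m (π (j - 1))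
          ⊆ intVec m s) ∧
        ∀ n : ℤ, n ≠ 0 → |n| ≤ (k : ℤ) → n • g j ∉ QpiVec m (π (j - 1)) := by
  choose next g hsub hprime hG hQ hb hc using exists_step G hwide k hs
  let chain : ℕ → {σ : Finset ℕ // ∀ p ∈ σ, p.Prime} :=
    fun j => Nat.rec ⟨π₀, hπ₀⟩ (fun _ σ => ⟨next σ.1 σ.2, hprime σ.1 σ.2⟩) j
  refine ⟨fun j => (chain j).1, fun j => g (chain (j - 1)).1 (chain (j - 1)).2, rfl,
    fun j _ => hsub _ _, fun j _ => (chain j).2, ?_⟩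
  rintro (_ | j) hj _
  · omega
  · exact ⟨hG _ _, hQ _ _, hb _ _, hc _ _⟩

/-- Lemma 6.3: if `G` is a wide subgroup of `ℚ^m`, `π₀` a finite set of primes,
`k ∈ ℕ⁺` and `s ∈ ℤ \ {0}`, there are a chain `π₀ ⊆ π₁ ⊆ ⋯ ⊆ π_k` of finite sets
of primes and `g₁,…,g_k ∈ G` satisfying conditions (a_j), (b_j), (c_j). -/
theorem stmt_9 (m : ℕ) (hm : 0 < m) (G : AddSubgroup (Fin m → ℚ))
    (hZ : ∀ v : Fin m → ℚ, (∀ i, ∃ z : ℤ, v i = (z : ℚ)) → v ∈ G)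
    (hwide : ∀ π : Finset ℕ, (∀ p ∈ π, Nat.Prime p) → ∃ x ∈ G, x ∉ QpiVec m π)
    (π₀ : Finset ℕ) (hπ₀ : ∀ p ∈ π₀, Nat.Prime p)
    (k : ℕ) (hk : 0 < k) (s : ℤ) (hs : s ≠ 0) :
    ∃ (π : ℕ → Finset ℕ) (g : ℕ → Fin m → ℚ),
      π 0 = π₀ ∧
      (∀ j < k, π j ⊆ π (j + 1)) ∧
      (∀ j ≤ k, ∀ p ∈ π j, Nat.Prime p) ∧
      ∀ j, 1 ≤ j → j ≤ k →
        g j ∈ G ∧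
        g j ∈ QpiVec m (π j) ∧
        ((AddSubgroup.zmultiples (g j) : Set (Fin m → ℚ)) ∩ QpiVec m (π (j - 1))
          ⊆ intVec m s) ∧
        ∀ n : ℤ, n ≠ 0 → |n| ≤ (k : ℤ) → n • g j ∉ QpiVec m (π (j - 1)) :=
  stmt_9_general m G hwide π₀ hπ₀ k s hs
end

section
/- For the poset (P, ≤) of conditions defined from a subgroup G of ℚ^m containing ℤ^m and an abelian group H, if p ∈ P, g ∈ G ∩ Q_{π^p}^m, h ∈ H and g + h ≠ 0, then there exists q ∈ P with q ≤ p, n^q = n^p + 1, and g + h ∉ U^q_{n^q}. -/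
/-!
Extend the condition `p` by one level, putting `U_{n+1} = (tℤ)^m × {0}` and `s_{n+1} = t` for a multiple `t`
of `s_n`. This lattice is a subgroup of `ℚ^m ⊕ H` lying in `G ∩ ℤ^m`, and it sits inside
`U_n = U_n + (s_nℤ)^m` because `(tℤ)^m ⊆ (s_nℤ)^m`; since it only contains integral vectors, the
levels `i ≤ n` are unchanged after intersecting with `Q_π^m + H`. Finally, a nonzero `g + h`
avoids `(tℤ)^m × {0}` once `t` exceeds `|g_i|` for some `g_i ≠ 0`.
-/

open Pointwise

/-- The copy of `(sℤ)^m` inside `ℚ^m ⊕ H`. -/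
def intVecH (m : ℕ) (H : Type*) [AddCommGroup H] (s : ℤ) : Set ((Fin m → ℚ) × H) :=
  {x | x.1 ∈ intVec m s ∧ x.2 = 0}

/-- The poset `ℙ` of conditions, built from a subgroup `G ≤ ℚ^m` and an abelian
group `H`; we work inside `ℚ^m ⊕ H`, represented as the product `(Fin m → ℚ) × H`. -/
structure Cond (m : ℕ) (G : AddSubgroup (Fin m → ℚ)) (H : Type*) [AddCommGroup H] where
  π : Finset ℕ
  primes : ∀ p ∈ π, Nat.Prime p
  n : ℕ
  U : ℕ → Set ((Fin m → ℚ) × H)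
  s : ℕ → ℕ
  s_pos : ∀ i ≤ n, 0 < s i
  zero_mem : ∀ i ≤ n, (0 : (Fin m → ℚ) × H) ∈ U i
  mem_sub : ∀ i ≤ n, U i ⊆ {x | x.1 ∈ G ∧ x.1 ∈ QpiVec m π}
  symm : ∀ i ≤ n, -U i = U i
  translate : ∀ i ≤ n, U i + intVecH m H (s i) = U i
  add_sub : ∀ i, i + 1 ≤ n → U (i + 1) + U (i + 1) ⊆ U i
  s_dvd : ∀ i, i + 1 ≤ n → s i ∣ s (i + 1)

/-- The order on the poset `ℙ` of conditions: `q ≤ p` iff `π^p ⊆ π^q`, `n^p ≤ n^q`,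
`U_i^q ∩ (Q_{π^p}^m + H) = U_i^p` and `s_i^q = s_i^p` for all `i ≤ n^p`. -/
def Cond.le {m : ℕ} {G : AddSubgroup (Fin m → ℚ)} {H : Type*} [AddCommGroup H]
    (q p : Cond m G H) : Prop :=
  p.π ⊆ q.π ∧ p.n ≤ q.n ∧
    (∀ i ≤ p.n, q.U i ∩ {x | x.1 ∈ QpiVec m p.π} = p.U i) ∧
    ∀ i ≤ p.n, q.s i = p.s i

section

variable {m : ℕ} {H : Type*} [AddCommGroup H]

lemma eq_zero_of_eq_mul_intCast_of_abs_lt {R : Type*} [Ring R] [LinearOrder R]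
    [IsStrictOrderedRing R] {q t : R} {z : ℤ} (hq : q = t * z) (hlt : |q| < t) : q = 0 := by
  rcases eq_or_ne z 0 with rfl | hz
  · simpa using hq
  have ht : 0 ≤ t := (abs_nonneg q).trans hlt.le
  have hz1 : (1 : R) ≤ |(z : R)| := by exact_mod_cast Int.one_le_abs hz
  have : t ≤ |q| := by
    rw [hq, abs_mul, abs_of_nonneg ht]
    exact le_mul_of_one_le_right ht hz1
  exact absurd hlt this.not_gt

variable (m H) in
def intLattice (s : ℤ) : AddSubgroup ((Fin m → ℚ) × H) :=
  (AddSubgroup.pi Set.univ fun _ => AddSubgroup.zmultiples (s : ℚ)).prod ⊥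

lemma coe_intLattice (s : ℤ) : (intLattice m H s : Set ((Fin m → ℚ) × H)) = intVecH m H s := by
  ext x
  simp only [intLattice, SetLike.mem_coe, AddSubgroup.mem_prod, AddSubgroup.mem_pi,
    Set.mem_univ, forall_const, AddSubgroup.mem_zmultiples_iff, zsmul_eq_mul,
    AddSubgroup.mem_bot, intVecH, intVec, Set.mem_ofPred_eq]
  simp only [eq_comm, mul_comm]

lemma zero_mem_intVecH (s : ℤ) : (0 : (Fin m → ℚ) × H) ∈ intVecH m H s := by
  rw [← coe_intLattice]
  exact zero_mem _

lemma intVecH_add_intVecH (s : ℤ) : intVecH m H s + intVecH m H s = intVecH m H s := by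
  rw [← coe_intLattice]
  exact coe_add_coe _

lemma neg_intVecH (s : ℤ) : -intVecH m H s = intVecH m H s := by
  rw [← coe_intLattice]
  exact neg_coe_set

lemma intVecH_subset_of_dvd {s t : ℤ} (hst : s ∣ t) : intVecH m H t ⊆ intVecH m H s := by
  rintro x ⟨hx, hx2⟩
  obtain ⟨k, rfl⟩ := hst
  refine ⟨fun i => ?_, hx2⟩
  obtain ⟨z, hz⟩ := hx i
  exact ⟨k * z, by rw [hz]; push_cast; ring⟩

lemma intVec_subset_QpiVec (s : ℤ) (π : Finset ℕ) : intVec m s ⊆ QpiVec m π := by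
  intro v hv i r hr hdvd
  obtain ⟨z, hz⟩ := hv i
  have hden : (v i).den = 1 := by rw [hz, ← Int.cast_mul, Rat.den_intCast]
  rw [hden, Nat.dvd_one] at hdvd
  exact absurd hdvd hr.ne_one

lemma intVec_subset_of_int_mem {G : AddSubgroup (Fin m → ℚ)}
    (hZ : ∀ v : Fin m → ℚ, (∀ i, ∃ z : ℤ, v i = (z : ℚ)) → v ∈ G) (s : ℤ) :
    intVec m s ⊆ G := by
  intro v hv
  refine hZ v fun i => ?_
  obtain ⟨z, hz⟩ := hv i
  exact ⟨s * z, by rw [hz]; push_cast; rfl⟩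

lemma exists_notMem_intVecH {x : (Fin m → ℚ) × H} (hx : x ≠ 0) (s : ℕ) (hs : 0 < s) :
    ∃ t : ℕ, 0 < t ∧ s ∣ t ∧ x ∉ intVecH m H t := by
  by_cases hx2 : x.2 = 0
  · obtain ⟨i, hi⟩ : ∃ i, x.1 i ≠ 0 := by
      by_contra! hall
      exact hx (Prod.ext (funext hall) hx2)
    refine ⟨s * (⌈|x.1 i|⌉₊ + 1), by positivity, dvd_mul_right _ _, fun hmem => hi ?_⟩
    obtain ⟨z, hz⟩ := hmem.1 i
    refine eq_zero_of_eq_mul_intCast_of_abs_lt hz ?_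
    calc |x.1 i| < ⌈|x.1 i|⌉₊ + 1 := (Nat.le_ceil _).trans_lt (lt_add_one _)
      _ ≤ ((s * (⌈|x.1 i|⌉₊ + 1) : ℕ) : ℤ) := by
        push_cast
        exact le_mul_of_one_le_left (by positivity) (by exact_mod_cast hs)
  · exact ⟨s, hs, dvd_rfl, fun hmem => hx2 hmem.2⟩

namespace Cond

variable {G : AddSubgroup (Fin m → ℚ)}

lemma intVecH_subset_U (p : Cond m G H) {i : ℕ} (hi : i ≤ p.n) :
    intVecH m H (p.s i) ⊆ p.U i := by
  intro x hx
  rw [← p.translate i hi]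
  exact ⟨0, p.zero_mem i hi, x, hx, zero_add x⟩

def extend (p : Cond m G H) (hZ : ∀ v : Fin m → ℚ, (∀ i, ∃ z : ℤ, v i = (z : ℚ)) → v ∈ G)
    (t : ℕ) (ht : 0 < t) (hdvd : p.s p.n ∣ t) : Cond m G H where
  π := p.π
  primes := p.primes
  n := p.n + 1
  U i := if i ≤ p.n then p.U i else intVecH m H t
  s i := if i ≤ p.n then p.s i else t
  s_pos i _ := by split_ifs with hi; exacts [p.s_pos i hi, ht]
  zero_mem i _ := by split_ifs with hi; exacts [p.zero_mem i hi, zero_mem_intVecH _]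
  mem_sub i _ := by
    split_ifs with hi
    · exact p.mem_sub i hi
    · rintro x ⟨hx, -⟩
      exact ⟨intVec_subset_of_int_mem hZ _ hx, intVec_subset_QpiVec _ _ hx⟩
  symm i _ := by split_ifs with hi; exacts [p.symm i hi, neg_intVecH _]
  translate i _ := by split_ifs with hi; exacts [p.translate i hi, intVecH_add_intVecH _]
  add_sub i hi := by
    rcases Nat.lt_or_ge i p.n with hlt | hge
    · simpa [Nat.succ_le_of_lt hlt, hlt.le] using p.add_sub i hlt
    · obtain rfl : i = p.n := by omega
      simp only [le_refl, if_true, Nat.not_succ_le_self, if_false, intVecH_add_intVecH]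
      exact (intVecH_subset_of_dvd (Int.natCast_dvd_natCast.mpr hdvd)).trans
        (p.intVecH_subset_U le_rfl)
  s_dvd i hi := by
    rcases Nat.lt_or_ge i p.n with hlt | hge
    · simpa [Nat.succ_le_of_lt hlt, hlt.le] using p.s_dvd i hlt
    · obtain rfl : i = p.n := by omega
      simpa using hdvd

variable {hZ : ∀ v : Fin m → ℚ, (∀ i, ∃ z : ℤ, v i = (z : ℚ)) → v ∈ G}
  {p : Cond m G H} {t : ℕ} {ht : 0 < t} {hdvd : p.s p.n ∣ t}

lemma extend_le : (p.extend hZ t ht hdvd).le p := by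
  refine ⟨subset_rfl, Nat.le_succ _, fun i hi => ?_, fun i hi => if_pos hi⟩
  simp only [extend, hi, if_true]
  exact Set.inter_eq_left.mpr fun x hx => (p.mem_sub i hi hx).2

lemma extend_U_n : (p.extend hZ t ht hdvd).U (p.extend hZ t ht hdvd).n = intVecH m H t :=
  if_neg (Nat.not_succ_le_self p.n)

end Cond

end

theorem stmt_16_general (m : ℕ) (G : AddSubgroup (Fin m → ℚ))
    (hZ : ∀ v : Fin m → ℚ, (∀ i, ∃ z : ℤ, v i = (z : ℚ)) → v ∈ G)
    (H : Type*) [AddCommGroup H]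
    (p : Cond m G H) (g : Fin m → ℚ)
    (h : H) (hne : ((g, h) : (Fin m → ℚ) × H) ≠ 0) :
    ∃ q : Cond m G H, q.le p ∧ q.n = p.n + 1 ∧ ((g, h) : (Fin m → ℚ) × H) ∉ q.U q.n := by
  obtain ⟨t, ht, hdvd, hnot⟩ := exists_notMem_intVecH hne (p.s p.n) (p.s_pos p.n le_rfl)
  exact ⟨p.extend hZ t ht hdvd, Cond.extend_le, rfl, by rwa [Cond.extend_U_n]⟩

/-- Lemma 7.5: given `p ∈ ℙ`, `g ∈ G ∩ Q_{π^p}^m` and `h ∈ H` with `g + h ≠ 0`,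
there is `q ≤ p` with `n^q = n^p + 1` and `g + h ∉ U^q_{n^q}`. -/
theorem stmt_16 (m : ℕ) (hm : 0 < m) (G : AddSubgroup (Fin m → ℚ))
    (hZ : ∀ v : Fin m → ℚ, (∀ i, ∃ z : ℤ, v i = (z : ℚ)) → v ∈ G)
    (H : Type*) [AddCommGroup H]
    (p : Cond m G H) (g : Fin m → ℚ) (hg : g ∈ G) (hgπ : g ∈ QpiVec m p.π)
    (h : H) (hne : ((g, h) : (Fin m → ℚ) × H) ≠ 0) :
    ∃ q : Cond m G H, q.le p ∧ q.n = p.n + 1 ∧ ((g, h) : (Fin m → ℚ) × H) ∉ q.U q.n :=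
  stmt_16_general m G hZ H p g h hne
end
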